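/- Let p and a be integers with 0 < a < p. For every τ ∈ ℂ with Im τ > 0, the unary theta series Ψ_p^{(a)}(τ) := (1/2) Σ_{k∈ℤ} k·ψ_{2p}^{(a)}(k)·exp( 2πiτ·k²/(4p) ) satisfies the modular transformation Ψ_p^{(a)}(τ) = (i/τ)^{3/2} · Σ_{b=1}^{p−1} √(2/p) · sin(abπ/p) · Ψ_p^{(b)}(−1/τ), where (i/τ)^{3/2} is taken with the principal branch of the complex power. -/
import Mathlib

open Complex Finset

/-- The 2p-periodic function `ψ_{2p}^{(a)}`. -/
def psi (p a k : ℤ) : ℤ :=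
  if k ≡ a [ZMOD 2 * p] then 1 else if k ≡ -a [ZMOD 2 * p] then -1 else 0

/-- The unary theta series `Ψ_p^{(a)}(τ)`. -/
noncomputable def Psi (p a : ℤ) (τ : ℂ) : ℂ :=
  (1 / 2) * ∑' k : ℤ, (k : ℂ) * (psi p a k : ℂ) *
    Complex.exp (2 * Real.pi * Complex.I * τ * (k : ℂ) ^ 2 / (4 * p))

/- ### Auxiliary definitions -/

/-- The Gaussian-type summand `k ↦ k exp(π i k² σ)`. -/
noncomputable def GG (σ : ℂ) (k : ℤ) : ℂ :=
  (k : ℂ) * Complex.exp (Real.pi * Complex.I * (k : ℂ) ^ 2 * σ)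

lemma GG_neg (σ : ℂ) (k : ℤ) : GG σ (-k) = -GG σ k := by
  simp only [GG]
  push_cast
  ring_nf

lemma summable_GG {σ : ℂ} (hσ : 0 < σ.im) : Summable (GG σ) := by
  have h := (summable_jacobiTheta₂'_term_iff 0 σ).mpr hσ
  have h2 := h.mul_left ((2 * (Real.pi : ℂ) * Complex.I)⁻¹)
  refine h2.congr fun n => ?_
  simp only [jacobiTheta₂'_term, jacobiTheta₂_term, GG, mul_zero, zero_add]
  have hπ : (Real.pi : ℂ) ≠ 0 := by exact_mod_cast Real.pi_ne_zero
  field_simp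

lemma tsum_GG_smul_zero {p : ℤ} {σ : ℂ} :
    ∑' m : ℤ, GG σ (0 + 2 * p * m) = 0 := by
  have h : ∑' m : ℤ, GG σ (0 + 2 * p * m) = ∑' m : ℤ, GG σ (0 + 2 * p * (-m)) :=
    ((Equiv.neg ℤ).tsum_eq fun m => GG σ (0 + 2 * p * m)).symm
  have h2 : ∀ m : ℤ, GG σ (0 + 2 * p * (-m)) = -GG σ (0 + 2 * p * m) := by
    intro m
    rw [show (0 + 2 * p * (-m)) = -(0 + 2 * p * m) by ring, GG_neg]
  rw [tsum_congr h2, tsum_neg] at h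
  have h3 : (2 : ℂ) * ∑' m : ℤ, GG σ (0 + 2 * p * m) = 0 := by linear_combination h
  simpa using h3

/-- reflection `S (2p - r) = - S r`. -/
lemma tsum_GG_reflect (p r : ℤ) (σ : ℂ) :
    ∑' m : ℤ, GG σ (2 * p - r + 2 * p * m) = -∑' m : ℤ, GG σ (r + 2 * p * m) := by
  have h : ∑' m : ℤ, GG σ (2 * p - r + 2 * p * m)
      = ∑' m : ℤ, GG σ (2 * p - r + 2 * p * (Equiv.subLeft (-1 : ℤ) m)) :=
    ((Equiv.subLeft (-1 : ℤ)).tsum_eq fun m => GG σ (2 * p - r + 2 * p * m)).symm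
  rw [h, ← tsum_neg]
  refine tsum_congr fun m => ?_
  rw [show (2 * p - r + 2 * p * (Equiv.subLeft (-1 : ℤ) m)) = -(r + 2 * p * m) by
    simp [Equiv.subLeft]; ring, GG_neg]


lemma Psi_eq {p b : ℤ} (hb : 0 < b) (hbp : b < p) {τ' : ℂ} (hτ' : 0 < τ'.im) :
    Psi p b τ' = ∑' n : ℤ, GG (τ' / (2 * p)) (b + 2 * p * n) := by
  have hp : (0:ℤ) < p := hb.trans hbp
  have hpC : ((p:ℂ)) ≠ 0 := Int.cast_ne_zero.mpr hp.ne'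
  set σ : ℂ := τ' / (2 * p) with hσdef
  have hσ : 0 < σ.im := by
    have h : σ = τ' / ((2 * (p:ℝ) : ℝ) : ℂ) := by rw [hσdef]; push_cast; ring
    rw [h, Complex.div_ofReal_im]
    have : (0:ℝ) < 2 * (p:ℝ) := by positivity
    positivity
  set f1 : ℤ → ℂ := fun k => if k ≡ b [ZMOD 2 * p] then GG σ k else 0 with hf1
  set f2 : ℤ → ℂ := fun k => if k ≡ -b [ZMOD 2 * p] then GG σ k else 0 with hf2
  have hsum1 : Summable f1 := by
    have h : f1 = Set.indicator {k : ℤ | k ≡ b [ZMOD 2 * p]} (GG σ) := by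
      ext k; simp [hf1, Set.indicator_apply, Set.mem_setOf_eq]
    rw [h]; exact (summable_GG hσ).indicator _
  have hsum2 : Summable f2 := by
    have h : f2 = Set.indicator {k : ℤ | k ≡ -b [ZMOD 2 * p]} (GG σ) := by
      ext k; simp [hf2, Set.indicator_apply, Set.mem_setOf_eq]
    rw [h]; exact (summable_GG hσ).indicator _
  have hdisj : ∀ k : ℤ, k ≡ b [ZMOD 2 * p] → k ≡ -b [ZMOD 2 * p] → False := by
    intro k h1 h2
    have h3 : b ≡ -b [ZMOD 2 * p] := h1.symm.trans h2
    have h4 : (2*p : ℤ) ∣ (-b) - b := Int.ModEq.dvd h3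
    have h5 : (2*p : ℤ) ∣ 2*b := by
      have h6 := (dvd_neg (α := ℤ)).mpr h4
      rwa [show -((-b) - b) = 2*b by ring] at h6
    have h7 := Int.le_of_dvd (by omega) h5
    omega
  have hterm : ∀ k : ℤ, (k : ℂ) * (psi p b k : ℂ) *
      Complex.exp (2 * Real.pi * Complex.I * τ' * (k : ℂ) ^ 2 / (4 * p)) = f1 k - f2 k := by
    intro k
    have hexp : 2 * (Real.pi:ℂ) * Complex.I * τ' * (k : ℂ) ^ 2 / (4 * p)
        = Real.pi * Complex.I * (k:ℂ)^2 * σ := by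
      rw [hσdef]; field_simp; ring
    by_cases h1 : k ≡ b [ZMOD 2 * p]
    · have h2 : ¬ (k ≡ -b [ZMOD 2*p]) := fun h2 => hdisj k h1 h2
      simp only [hf1, hf2, psi, h1, h2, if_true, if_false, GG]
      push_cast
      rw [hexp]; ring
    · by_cases h2 : k ≡ -b [ZMOD 2*p]
      · simp only [hf1, hf2, psi, h1, h2, if_true, if_false, GG]
        push_cast
        rw [hexp]; ring
      · simp only [hf1, hf2, psi, h1, h2, if_false]
        push_cast; ring
  rw [Psi, tsum_congr hterm, Summable.tsum_sub hsum1 hsum2]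
  have hneg : ∑' k : ℤ, f2 k = -∑' k : ℤ, f1 k := by
    have e1 : ∑' k : ℤ, f2 ((Equiv.neg ℤ) k) = ∑' k : ℤ, f2 k := (Equiv.neg ℤ).tsum_eq f2
    rw [← e1, ← tsum_neg]
    refine tsum_congr fun k => ?_
    have hiff : (-k ≡ -b [ZMOD 2*p]) ↔ (k ≡ b [ZMOD 2*p]) :=
      ⟨fun h => by simpa using h.neg, fun h => h.neg⟩
    simp only [hf1, hf2, Equiv.neg_apply]
    by_cases h : k ≡ b [ZMOD 2*p]
    · rw [if_pos (hiff.mpr h), if_pos h, GG_neg]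
    · rw [if_neg (fun hc => h (hiff.mp hc)), if_neg h, neg_zero]
  rw [hneg]
  have hinj : Function.Injective (fun n : ℤ => b + 2 * p * n) := by
    intro m n h
    simp only [add_right_inj] at h
    exact mul_left_cancel₀ (by omega : (2*p:ℤ) ≠ 0) h
  have hsupp : Function.support f1 ⊆ Set.range (fun n : ℤ => b + 2 * p * n) := by
    intro k hk
    have h1 : k ≡ b [ZMOD 2*p] := by
      by_contra hc
      exact hk (by simp [hf1, hc])
    obtain ⟨c, hc⟩ := Int.ModEq.dvd h1
    exact ⟨-c, by show b + 2*p*(-c) = k; linear_combination hc⟩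
  have hre : ∑' n : ℤ, f1 (b + 2*p*n) = ∑' k : ℤ, f1 k := hinj.tsum_eq hsupp
  rw [← hre]
  have hGG : ∀ n : ℤ, f1 (b + 2*p*n) = GG σ (b + 2*p*n) := by
    intro n
    have h : (b + 2*p*n) ≡ b [ZMOD 2*p] := by
      rw [Int.modEq_iff_dvd]; exact ⟨-n, by ring⟩
    simp [hf1, h]
  rw [tsum_congr hGG]
  ring


open HurwitzZeta in
lemma tsum_GG_eq_theta (p b : ℤ) (hp : 0 < p) {τ' : ℂ} (hτ' : 0 < τ'.im) :
    ∑' n : ℤ, GG (τ' / (2 * p)) (b + 2 * p * n)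
      = 2 * p * jacobiTheta₂'' ((b:ℂ) / (2 * p)) (2 * p * τ') := by
  have hpC : ((p:ℂ)) ≠ 0 := Int.cast_ne_zero.mpr hp.ne'
  have hT : 0 < (2 * (p:ℂ) * τ').im := by
    have h : (2 * (p:ℂ) * τ').im = 2 * (p:ℝ) * τ'.im := by
      simp [Complex.mul_im]
    rw [h]
    have : (0:ℝ) < 2 * (p:ℝ) := by positivity
    positivity
  have hs1 : Summable fun n => jacobiTheta₂'_term n ((b:ℂ) / (2 * p) * (2 * p * τ')) (2 * p * τ') :=
    (summable_jacobiTheta₂'_term_iff _ _).mpr hT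
  have hs2 : Summable fun n => jacobiTheta₂_term n ((b:ℂ) / (2 * p) * (2 * p * τ')) (2 * p * τ') :=
    (summable_jacobiTheta₂_term_iff _ _).mpr hT
  rw [jacobiTheta₂'', jacobiTheta₂', jacobiTheta₂, tsum_div_const.symm, tsum_mul_left.symm,
    ← Summable.tsum_add (hs1.div_const _) (hs2.mul_left _), ← tsum_mul_left, ← tsum_mul_left]
  refine tsum_congr fun n => ?_
  simp only [jacobiTheta₂'_term, jacobiTheta₂_term, GG]
  rw [show ((b + 2*p*n : ℤ):ℂ) = (b:ℂ) + 2*p*n by push_cast; ring]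
  have hexp : (Real.pi:ℂ) * Complex.I * ((b:ℂ) + 2*p*n)^2 * (τ' / (2*p))
      = (Real.pi:ℂ) * Complex.I * ((b:ℂ) / (2 * p))^2 * (2 * p * τ')
        + (2 * (Real.pi:ℂ) * Complex.I * n * ((b:ℂ) / (2 * p) * (2 * p * τ'))
          + (Real.pi:ℂ) * Complex.I * n^2 * (2 * p * τ')) := by
    field_simp
    ring
  rw [hexp, Complex.exp_add]
  field_simp [two_pi_I_ne_zero]
  ring


/-- The bijection between `Fin N.toNat × ℤ` and `ℤ` given by `(r, m) ↦ r + N * m`. -/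
def classEquiv (N : ℤ) (hN : 0 < N) : Fin N.toNat × ℤ ≃ ℤ where
  toFun := fun x => (x.1 : ℤ) + N * x.2
  invFun := fun n => (⟨(n % N).toNat, by
    have h1 := Int.emod_nonneg n hN.ne'
    have h2 := Int.emod_lt_of_pos n hN
    omega⟩, n / N)
  left_inv := by
    rintro ⟨r, m⟩
    have hr1 : (0:ℤ) ≤ (r:ℤ) := by positivity
    have hr2 : ((r:ℕ):ℤ) < N := by have := r.2; omega
    have hmod : ((r:ℤ) + N * m) % N = r := by
      rw [Int.add_mul_emod_self_left, Int.emod_eq_of_lt hr1 hr2]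
    have hdiv : ((r:ℤ) + N * m) / N = m := by
      rw [Int.add_mul_ediv_left _ _ hN.ne', Int.ediv_eq_zero_of_lt hr1 hr2, zero_add]
    ext
    · simp only [hmod]; omega
    · simp only [hdiv]
  right_inv := by
    intro n
    simp only []
    have h1 := Int.emod_nonneg n hN.ne'
    rw [Int.toNat_of_nonneg h1]
    exact Int.emod_add_mul_ediv n N

/-- Decompose a sum over `ℤ` into residue classes mod `N`. -/
lemma tsum_int_eq_sum_classes {f : ℤ → ℂ} (hf : Summable f) {N : ℤ} (hN : 0 < N) :
    ∑' n : ℤ, f n = ∑ r ∈ Finset.Ico (0:ℤ) N, ∑' m : ℤ, f (r + N * m) := by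
  have hn0N : (N.toNat : ℤ) = N := Int.toNat_of_nonneg hN.le
  have h1 : ∑' n : ℤ, f n = ∑' x : Fin N.toNat × ℤ, f (classEquiv N hN x) :=
    ((classEquiv N hN).tsum_eq f).symm
  have hsum : Summable fun x : Fin N.toNat × ℤ => f (classEquiv N hN x) :=
    (classEquiv N hN).summable_iff.mpr hf
  rw [h1, Summable.tsum_prod hsum, tsum_fintype]
  have h2 : ∀ r : Fin N.toNat, ∑' m : ℤ, f (classEquiv N hN (r, m))
      = ∑' m : ℤ, f ((r:ℤ) + N * m) := fun r => rfl
  rw [Finset.sum_congr rfl fun r _ => h2 r,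
    Fin.sum_univ_eq_sum_range (fun r : ℕ => ∑' m : ℤ, f ((r:ℤ) + N * m)) N.toNat]
  refine Finset.sum_nbij' (fun r : ℕ => (r:ℤ)) (fun r : ℤ => r.toNat) ?_ ?_ ?_ ?_ ?_
  · intro r hr
    simp only [Finset.mem_range] at hr
    simp only [Finset.mem_Ico]
    omega
  · intro r hr
    simp only [Finset.mem_Ico] at hr
    simp only [Finset.mem_range]
    omega
  · intro r _; omega
  · intro r hr
    simp only [Finset.mem_Ico] at hr
    omega
  · intro r _; rfl


noncomputable def SS (σ : ℂ) (p r : ℤ) : ℂ := ∑' m : ℤ, GG σ (r + 2 * p * m)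

noncomputable def CC (p a r : ℤ) : ℂ :=
  2 * (Real.pi : ℂ) * Complex.I *
    Complex.exp (2 * Real.pi * Complex.I * r * ((a : ℂ) / (2 * p)))

lemma theta'_split (p a : ℤ) (ha : 0 < a) (hap : a < p) {σ : ℂ} (hσ : 0 < σ.im) :
    jacobiTheta₂' ((a:ℂ)/(2*p)) σ =
      (-4) * Real.pi * ∑ b ∈ Finset.Icc (1:ℤ) (p-1),
        Complex.sin (Real.pi * a * b / p) * SS σ p b := by
  have hp : (0:ℤ) < p := ha.trans hap
  have hpC : ((p:ℂ)) ≠ 0 := Int.cast_ne_zero.mpr hp.ne'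
  have hN : (0:ℤ) < 2*p := by omega
  have hsum : Summable fun n : ℤ => jacobiTheta₂'_term n ((a:ℂ)/(2*p)) σ :=
    (summable_jacobiTheta₂'_term_iff _ _).mpr hσ
  rw [jacobiTheta₂', tsum_int_eq_sum_classes hsum hN]
  have hclass : ∀ r : ℤ, ∑' m : ℤ, jacobiTheta₂'_term (r + 2*p*m) ((a:ℂ)/(2*p)) σ
      = CC p a r * SS σ p r := by
    intro r
    rw [CC, SS, ← tsum_mul_left]
    refine tsum_congr fun m => ?_
    rw [jacobiTheta₂'_term, jacobiTheta₂_term, GG]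
    have hsplit : 2 * (Real.pi:ℂ) * Complex.I * ((r + 2*p*m : ℤ):ℂ) * ((a:ℂ)/(2*p))
        + (Real.pi:ℂ) * Complex.I * ((r + 2*p*m : ℤ):ℂ)^2 * σ
        = (2 * (Real.pi:ℂ) * Complex.I * r * ((a:ℂ)/(2*p)))
          + (((m*a : ℤ):ℂ) * (2 * (Real.pi:ℂ) * Complex.I)
          + (Real.pi:ℂ) * Complex.I * ((r + 2*p*m : ℤ):ℂ)^2 * σ) := by
      push_cast
      field_simp
      ring
    rw [hsplit, Complex.exp_add, Complex.exp_add, Complex.exp_int_mul_two_pi_mul_I]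
    push_cast
    ring
  rw [Finset.sum_congr rfl fun r _ => hclass r]
  have hS0 : SS σ p 0 = 0 := tsum_GG_smul_zero
  have hSrefl : ∀ r, SS σ p (2*p - r) = - SS σ p r := fun r => tsum_GG_reflect p r σ
  have hSp : SS σ p p = 0 := by
    have h := hSrefl p
    rw [show 2*p - p = p by ring] at h
    have h2 : (2:ℂ) * SS σ p p = 0 := by linear_combination h
    simpa using h2
  have hsub : (Finset.Icc (1:ℤ) (p-1) ∪ Finset.Icc (p+1) (2*p-1)) ⊆ Finset.Ico (0:ℤ) (2*p) := by
    intro x hx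
    simp only [Finset.mem_union, Finset.mem_Icc] at hx
    simp only [Finset.mem_Ico]
    omega
  have hzero : ∀ x ∈ Finset.Ico (0:ℤ) (2*p),
      x ∉ (Finset.Icc (1:ℤ) (p-1) ∪ Finset.Icc (p+1) (2*p-1)) → CC p a x * SS σ p x = 0 := by
    intro x hx hnx
    simp only [Finset.mem_union, Finset.mem_Icc, not_or, not_and_or] at hnx
    simp only [Finset.mem_Ico] at hx
    have : x = 0 ∨ x = p := by omega
    rcases this with h | h
    · rw [h, hS0, mul_zero]
    · rw [h, hSp, mul_zero]
  rw [← Finset.sum_subset hsub hzero]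
  have hdisj : Disjoint (Finset.Icc (1:ℤ) (p-1)) (Finset.Icc (p+1) (2*p-1)) := by
    rw [Finset.disjoint_left]
    intro x h1 h2
    simp only [Finset.mem_Icc] at h1 h2
    omega
  rw [Finset.sum_union hdisj]
  have hre : ∑ r ∈ Finset.Icc (p+1) (2*p-1), CC p a r * SS σ p r
      = ∑ b ∈ Finset.Icc (1:ℤ) (p-1), CC p a (2*p - b) * (- SS σ p b) := by
    refine Finset.sum_nbij' (fun r => 2*p - r) (fun b => 2*p - b) ?_ ?_ ?_ ?_ ?_
    · intro r hr; simp only [Finset.mem_Icc] at hr ⊢; omega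
    · intro r hr; simp only [Finset.mem_Icc] at hr ⊢; omega
    · intro r _; ring
    · intro r _; ring
    · intro r hr
      rw [show (2*p - (2*p - r)) = r by ring, hSrefl r]
      ring
  rw [hre, ← Finset.sum_add_distrib, Finset.mul_sum]
  refine Finset.sum_congr rfl fun b hb => ?_
  have hCdiff : CC p a b - CC p a (2*p - b)
      = (-4) * (Real.pi:ℂ) * Complex.sin (Real.pi * a * b / p) := by
    have h1 : 2 * (Real.pi:ℂ) * Complex.I * (b:ℂ) * ((a:ℂ)/(2*p))
        = ((Real.pi:ℂ) * a * b / p) * Complex.I := by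
      field_simp
    have h2 : 2 * (Real.pi:ℂ) * Complex.I * ((2*p - b : ℤ):ℂ) * ((a:ℂ)/(2*p))
        = ((a : ℤ):ℂ) * (2 * (Real.pi:ℂ) * Complex.I)
          + (-((Real.pi:ℂ) * a * b / p)) * Complex.I := by
      push_cast
      field_simp
      ring
    rw [CC, CC, h1, h2, Complex.exp_add, Complex.exp_int_mul_two_pi_mul_I, Complex.sin]
    ring
  linear_combination (SS σ p b) * hCdiff


lemma ofReal_mul_cpow {r : ℝ} (hr : 0 < r) {x : ℂ} (hx : x ≠ 0) (s : ℂ) :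
    ((r:ℂ) * x) ^ s = (r:ℂ) ^ s * x ^ s := by
  have hr0 : (r:ℂ) ≠ 0 := by
    simpa using hr.ne'
  rw [Complex.cpow_def_of_ne_zero (mul_ne_zero hr0 hx), Complex.cpow_def_of_ne_zero hr0,
    Complex.cpow_def_of_ne_zero hx, ← Complex.exp_add, Complex.log_ofReal_mul hr hx,
    Complex.ofReal_log hr.le, add_mul]

lemma cpow_split (p : ℤ) (hp : 0 < p) {τ : ℂ} (hτ0 : τ ≠ 0) :
    (Complex.I / (2 * p * τ)) ^ ((3:ℂ)/2)
      = (((1/(2*(p:ℝ))) ^ ((3:ℝ)/2) : ℝ) : ℂ) * (Complex.I / τ) ^ ((3:ℂ)/2) := by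
  have hp' : (0:ℝ) < (p:ℝ) := by exact_mod_cast hp
  have h : Complex.I / (2 * p * τ) = ((1/(2*(p:ℝ)) : ℝ) : ℂ) * (Complex.I / τ) := by
    have hpC : ((p:ℂ)) ≠ 0 := Int.cast_ne_zero.mpr hp.ne'
    push_cast
    field_simp
  rw [h, ofReal_mul_cpow (by positivity) (div_ne_zero Complex.I_ne_zero hτ0)]
  congr 1
  rw [show ((3:ℂ)/2) = (((3:ℝ)/2 : ℝ) : ℂ) by norm_num]
  rw [← Complex.ofReal_cpow (by positivity)]

lemma real_const (p : ℤ) (hp : 0 < p) :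
    4 * (p:ℝ) * ((1/(2*(p:ℝ))) ^ ((3:ℝ)/2)) = Real.sqrt (2 / (p:ℝ)) := by
  have hp' : (0:ℝ) < (p:ℝ) := by exact_mod_cast hp
  set x : ℝ := 1/(2*(p:ℝ)) with hx
  have hx0 : 0 < x := by positivity
  have hsq : x ^ ((3:ℝ)/2) = x * Real.sqrt x := by
    rw [show ((3:ℝ)/2) = 1 + 1/2 by norm_num, Real.rpow_add hx0, Real.rpow_one,
      ← Real.sqrt_eq_rpow]
  rw [hsq]
  have key : (4 * (p:ℝ) * (x * Real.sqrt x))^2 = 2/(p:ℝ) := by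
    have hs : Real.sqrt x ^ 2 = x := Real.sq_sqrt hx0.le
    have expand : (4 * (p:ℝ) * (x * Real.sqrt x))^2 = 16 * (p:ℝ)^2 * x^2 * (Real.sqrt x ^ 2) := by
      ring
    rw [expand, hs, hx]
    field_simp
    ring
  have hnn : (0:ℝ) ≤ 4 * (p:ℝ) * (x * Real.sqrt x) := by
    have h1 : (0:ℝ) ≤ Real.sqrt x := Real.sqrt_nonneg x
    have h2 : (0:ℝ) ≤ 4 * (p:ℝ) := by linarith
    exact mul_nonneg h2 (mul_nonneg hx0.le h1)
  rw [← key, Real.sqrt_sq hnn]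

theorem statement13 (p a : ℤ) (ha : 0 < a) (hap : a < p) (τ : ℂ) (hτ : 0 < τ.im) :
    Psi p a τ =
      (Complex.I / τ) ^ ((3 : ℂ) / 2) *
        ∑ b ∈ Finset.Icc (1 : ℤ) (p - 1),
          (Real.sqrt (2 / (p : ℝ)) : ℂ) *
            (Real.sin ((a : ℝ) * (b : ℝ) * Real.pi / (p : ℝ)) : ℂ) *
            Psi p b (-1 / τ) := by
  have hp : (0:ℤ) < p := ha.trans hap
  have hpC : ((p:ℂ)) ≠ 0 := Int.cast_ne_zero.mpr hp.ne'
  have hτ0 : τ ≠ 0 := by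
    intro h
    rw [h] at hτ
    simp at hτ
  have h2pτ : (2*(p:ℂ)*τ) ≠ 0 := mul_ne_zero (mul_ne_zero two_ne_zero hpC) hτ0
  have hτ2 : 0 < (-1/τ).im := by
    rw [div_eq_mul_inv, neg_one_mul, Complex.neg_im, Complex.inv_im, neg_div, neg_neg]
    exact div_pos hτ (Complex.normSq_pos.mpr hτ0)
  have hσ : 0 < ((-1/τ)/(2*(p:ℂ))).im := by
    have h : ((-1/τ)/(2*(p:ℂ))) = (-1/τ) / ((2 * (p:ℝ) : ℝ) : ℂ) := by push_cast; ring_nf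
    rw [h, Complex.div_ofReal_im]
    have : (0:ℝ) < 2 * (p:ℝ) := by positivity
    positivity
  -- Left side
  rw [Psi_eq ha hap hτ, tsum_GG_eq_theta p a hp hτ]
  -- functional equation
  have hfe := HurwitzZeta.jacobiTheta₂'_functional_equation' ((a:ℂ)/(2*p)) (-1/(2*(p:ℂ)*τ))
  have e1 : -Complex.I * (-1/(2*(p:ℂ)*τ)) = Complex.I / (2*(p:ℂ)*τ) := by ring
  have e2 : -1/(-1/(2*(p:ℂ)*τ)) = 2*(p:ℂ)*τ := by field_simp
  have e3 : (-1 : ℂ)/(2*(p:ℂ)*τ) = (-1/τ)/(2*(p:ℂ)) := by field_simp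
  rw [e1, e2] at hfe
  have hπ : (Real.pi:ℂ) ≠ 0 := Complex.ofReal_ne_zero.mpr Real.pi_ne_zero
  have hpow_ne : (Complex.I/(2*(p:ℂ)*τ)) ^ ((3:ℂ)/2) ≠ 0 := by
    simp only [Ne, Complex.cpow_eq_zero_iff, not_and_or]
    left
    exact div_ne_zero Complex.I_ne_zero h2pτ
  have hθ : HurwitzZeta.jacobiTheta₂'' ((a:ℂ)/(2*p)) (2*(p:ℂ)*τ)
      = (Complex.I/(2*(p:ℂ)*τ)) ^ ((3:ℂ)/2) / (-2*(Real.pi:ℂ))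
        * jacobiTheta₂' ((a:ℂ)/(2*p)) ((-1/τ)/(2*(p:ℂ))) := by
    rw [← e3, hfe]
    field_simp
  rw [hθ, theta'_split p a ha hap hσ]
  -- right side: rewrite Psi and sin
  have hPsi : ∀ b ∈ Finset.Icc (1:ℤ) (p-1),
      (Real.sqrt (2 / (p : ℝ)) : ℂ) * (Real.sin ((a : ℝ) * (b : ℝ) * Real.pi / (p : ℝ)) : ℂ) *
        Psi p b (-1 / τ)
      = (Real.sqrt (2 / (p : ℝ)) : ℂ) *
          (Complex.sin ((Real.pi:ℂ) * a * b / p) * SS ((-1/τ)/(2*(p:ℂ))) p b) := by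
    intro b hb
    simp only [Finset.mem_Icc] at hb
    rw [Psi_eq (by omega : (0:ℤ) < b) (by omega : b < p) hτ2]
    rw [show ((Real.sin ((a:ℝ)*(b:ℝ)*Real.pi/(p:ℝ)) : ℝ) : ℂ)
        = Complex.sin ((Real.pi:ℂ) * a * b / p) by
      rw [Complex.ofReal_sin]
      congr 1
      push_cast
      ring]
    rw [SS]
    ring
  rw [Finset.sum_congr rfl hPsi, ← Finset.mul_sum]
  -- final constant juggling
  rw [cpow_split p hp hτ0]
  have hrc := real_const p hp
  have hrcC : 4 * (p:ℂ) * (((1/(2*(p:ℝ))) ^ ((3:ℝ)/2) : ℝ) : ℂ) = (Real.sqrt (2 / (p:ℝ)) : ℂ) := by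
    rw [← hrc]
    push_cast
    ring
  have hcancel : ∀ X Y : ℂ, X / (-2*(Real.pi:ℂ)) * (-4*(Real.pi:ℂ) * Y) = 2 * X * Y := by
    intro X Y
    field_simp
    ring
  rw [hcancel]
  linear_combination (Complex.I / τ) ^ ((3:ℂ)/2) *
    (∑ b ∈ Finset.Icc (1:ℤ) (p-1),
      Complex.sin ((Real.pi:ℂ) * a * b / p) * SS ((-1/τ)/(2*(p:ℂ))) p b) * hrcC
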